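/- There exist frame data lengths L₁ < L₂ and normalized distances d₁, d₂ > 0 such that T(L₁, d₁) < T(L₂, d₁) and T(L₁, d₂) > T(L₂, d₂), where T(L,d) = (L/(L+51))·(1 − erfc(1/d))^(L+51); in other words, the ordering of normalized throughputs of two frame lengths can reverse as the distance changes. -/

import Mathlib

/-! With `q = 1 - erfc (1/d)`, `T 2 d - T 1 d = (26/689) q⁵² (51/104 - erfc (1/d))`, so the longer
frame wins exactly when `erfc (1/d) < 51/104`. The Gaussian tail bound
`erfc x ≤ 2 e^{-x²} / (x √π)` puts `erfc 1` below this threshold, while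
`erfc x ≥ 1 - 2x/√π` puts `erfc (1/10)` above it. -/

open Real Set

/-- The complementary error function: erfc x = (2/√π) ∫_x^∞ exp(−t²) dt. -/
noncomputable def erfc (x : ℝ) : ℝ :=
  (2 / Real.sqrt Real.pi) * ∫ t in Set.Ioi x, Real.exp (-t ^ 2)

/-- Normalized throughput of a frame of data length `L` bits with overhead 51 bits
at normalized distance `d`: T(L,d) = (L/(L+51))·(1 − erfc(1/d))^(L+51). -/
noncomputable def T (L : ℕ) (d : ℝ) : ℝ :=
  ((L : ℝ) / (L + 51)) * (1 - erfc (1 / d)) ^ (L + 51)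

open MeasureTheory

lemma integrableOn_exp_neg_sq_Ioi (a : ℝ) :
    IntegrableOn (fun t : ℝ => exp (-t ^ 2)) (Ioi a) := by
  simpa using (integrable_exp_neg_mul_sq one_pos).integrableOn (s := Ioi a)

lemma intervalIntegrable_exp_neg_sq (a b : ℝ) :
    IntervalIntegrable (fun t : ℝ => exp (-t ^ 2)) volume a b :=
  (by fun_prop : Continuous fun t : ℝ => exp (-t ^ 2)).intervalIntegrable a b

lemma erfc_eq_one_sub (x : ℝ) :
    erfc x = 1 - 2 / √π * ∫ t in (0 : ℝ)..x, exp (-t ^ 2) := by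
  have hsplit := intervalIntegral.integral_interval_add_Ioi
    (integrableOn_exp_neg_sq_Ioi 0) (integrableOn_exp_neg_sq_Ioi x)
  have hhalf : ∫ t in Ioi (0 : ℝ), exp (-t ^ 2) = √π / 2 := by
    simpa using integral_gaussian_Ioi 1
  have hpi : √π ≠ 0 := (sqrt_pos.2 pi_pos).ne'
  rw [erfc, ← sub_eq_of_eq_add' (hsplit.trans hhalf).symm]
  field_simp

lemma erfc_lt_one {x : ℝ} (hx : 0 < x) : erfc x < 1 := by
  have hpos : 0 < ∫ t in (0 : ℝ)..x, exp (-t ^ 2) :=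
    intervalIntegral.intervalIntegral_pos_of_pos_on
      (intervalIntegrable_exp_neg_sq _ _)
      (fun t _ => exp_pos _) hx
  rw [erfc_eq_one_sub]
  have : 0 < 2 / √π * ∫ t in (0 : ℝ)..x, exp (-t ^ 2) := by positivity
  linarith

lemma one_sub_le_erfc {x : ℝ} (hx : 0 ≤ x) : 1 - 2 / √π * x ≤ erfc x := by
  have hle : ∫ t in (0 : ℝ)..x, exp (-t ^ 2) ≤ ∫ _ in (0 : ℝ)..x, (1 : ℝ) :=
    intervalIntegral.integral_mono_on hx
      (intervalIntegrable_exp_neg_sq _ _)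
      intervalIntegrable_const (fun t _ => exp_le_one_iff.2 (by nlinarith [sq_nonneg t]))
  rw [intervalIntegral.integral_const, smul_eq_mul, mul_one, sub_zero] at hle
  rw [erfc_eq_one_sub]
  gcongr

lemma erfc_le_exp_div {x : ℝ} (hx : 0 < x) : erfc x ≤ 2 * exp (-x ^ 2) / (x * √π) := by
  -- On `t > x` we have `t² ≥ x t`, so the Gaussian tail is dominated by an exponential one.
  have htail : ∫ t in Ioi x, exp (-t ^ 2) ≤ ∫ t in Ioi x, exp (-x * t) :=
    setIntegral_mono_on (integrableOn_exp_neg_sq_Ioi x)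
      (integrableOn_exp_mul_Ioi (neg_lt_zero.2 hx) x) measurableSet_Ioi
      (fun t ht => exp_le_exp.2 (by nlinarith [mem_Ioi.1 ht]))
  rw [integral_exp_mul_Ioi (neg_lt_zero.2 hx)] at htail
  have hpi : 0 < √π := sqrt_pos.2 pi_pos
  calc erfc x ≤ 2 / √π * (-exp (-x * x) / -x) := by
        rw [erfc]; gcongr
    _ = 2 * exp (-x ^ 2) / (x * √π) := by
        field_simp

lemma seven_fourths_lt_sqrt_pi : 7 / 4 < √π :=
  lt_sqrt_of_sq_lt (by linarith [pi_gt_d2])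

lemma erfc_one_lt : erfc 1 < 51 / 104 := by
  have hexp : exp (-1) < 10 / 27 := by
    rw [exp_neg, inv_lt_comm₀ (exp_pos 1) (by norm_num)]
    linarith [exp_one_gt_d9]
  have hpi := seven_fourths_lt_sqrt_pi
  calc erfc 1 ≤ 2 * exp (-1) / √π := by simpa using erfc_le_exp_div one_pos
    _ < 51 / 104 := by
        rw [div_lt_iff₀ (by linarith)]
        nlinarith

lemma lt_erfc_one_div_ten : 51 / 104 < erfc (1 / 10) := by
  have hpi := seven_fourths_lt_sqrt_pi
  have : 2 / √π * (1 / 10) < 53 / 104 := by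
    rw [div_mul_eq_mul_div, div_lt_iff₀ (by linarith)]
    linarith
  linarith [one_sub_le_erfc (x := 1 / 10) (by norm_num)]

lemma T_succ_sub_T (L : ℕ) (d : ℝ) :
    T (L + 1) d - T L d = (1 - erfc (1 / d)) ^ (L + 51) *
      ((L + 1) * (1 - erfc (1 / d)) / (L + 52) - L / (L + 51)) := by
  unfold T
  push_cast
  ring

lemma T_two_sub_T_one (d : ℝ) :
    T 2 d - T 1 d = 26 / 689 * (1 - erfc (1 / d)) ^ 52 * (51 / 104 - erfc (1 / d)) := by
  rw [T_succ_sub_T 1 d]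
  norm_num
  ring

lemma T_one_lt_T_two_iff {d : ℝ} (h : erfc (1 / d) ≠ 1) :
    T 1 d < T 2 d ↔ erfc (1 / d) < 51 / 104 := by
  have hpow : 0 < 26 / 689 * (1 - erfc (1 / d)) ^ 52 :=
    mul_pos (by norm_num) (Even.pow_pos (by decide) (sub_ne_zero.2 h.symm))
  rw [← sub_pos, T_two_sub_T_one, mul_pos_iff_of_pos_left hpow, sub_pos]

lemma T_two_lt_T_one_iff {d : ℝ} (h : erfc (1 / d) ≠ 1) :
    T 2 d < T 1 d ↔ 51 / 104 < erfc (1 / d) := by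
  have hpow : 0 < 26 / 689 * (1 - erfc (1 / d)) ^ 52 :=
    mul_pos (by norm_num) (Even.pow_pos (by decide) (sub_ne_zero.2 h.symm))
  rw [← sub_neg, T_two_sub_T_one, ← neg_pos, ← mul_neg, mul_pos_iff_of_pos_left hpow, neg_pos,
    sub_neg]

/-- The ordering of normalized throughputs of two frame lengths can reverse as the
distance changes: there are L₁ < L₂ and distances d₁, d₂ > 0 with
T(L₁, d₁) < T(L₂, d₁) and T(L₁, d₂) > T(L₂, d₂). -/
theorem throughput_ordering_can_reverse :
    ∃ (L₁ L₂ : ℕ) (d₁ d₂ : ℝ), L₁ < L₂ ∧ 0 < d₁ ∧ 0 < d₂ ∧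
      T L₁ d₁ < T L₂ d₁ ∧ T L₁ d₂ > T L₂ d₂ := by
  have hne : ∀ d : ℝ, 0 < d → erfc (1 / d) ≠ 1 := fun d hd => (erfc_lt_one (by positivity)).ne
  refine ⟨1, 2, 1, 10, one_lt_two, one_pos, by norm_num, ?_, ?_⟩
  · exact (T_one_lt_T_two_iff (hne 1 one_pos)).2 (by simpa using erfc_one_lt)
  · exact (T_two_lt_T_one_iff (hne 10 (by norm_num))).2 (by simpa using lt_erfc_one_div_ten)
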